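/- Fix t ∈ ℝ and define p : ℝ → ℂ by p(x) := (1/(2π)) ∫_{−∞}^{∞} e^{−u⁴/4 − t u²/2 − i u x} du. Then p is three times continuously differentiable on ℝ and satisfies the third-order ODE p'''(x) − t·p'(x) − x·p(x) = 0 for all x ∈ ℝ. -/

import Mathlib

open MeasureTheory

noncomputable section

/-- The Pearcey function `p(x) = (1/2π) ∫_ℝ e^{-u⁴/4 - tu²/2 - iux} du`. -/
def pearceyP (t : ℝ) (x : ℝ) : ℂ :=
  ((1 / (2 * Real.pi) : ℝ) : ℂ) *
    ∫ u : ℝ, Complex.exp (-(u : ℂ) ^ 4 / 4 - (t : ℂ) * (u : ℂ) ^ 2 / 2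
      - Complex.I * (u : ℂ) * (x : ℂ))

namespace PearceyAux
open Real Filter Metric

/-- The phase. -/
def cphi (t x u : ℝ) : ℂ :=
  -(u : ℂ) ^ 4 / 4 - (t : ℂ) * (u : ℂ) ^ 2 / 2 - Complex.I * (u : ℂ) * (x : ℂ)

/-- The integrand with `n` derivatives in `x` taken. -/
def FF (t : ℝ) (n : ℕ) (x u : ℝ) : ℂ :=
  (-Complex.I * (u : ℂ)) ^ n * Complex.exp (cphi t x u)

lemma cphi_re (t x u : ℝ) : (cphi t x u).re = -u ^ 4 / 4 - t * u ^ 2 / 2 := by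
  have : cphi t x u = ((-u ^ 4 / 4 - t * u ^ 2 / 2 : ℝ) : ℂ) + ((-(u * x) : ℝ) : ℂ) * Complex.I := by
    unfold cphi; push_cast; ring
  rw [this]
  simp [← Complex.ofReal_pow]

lemma norm_FF (t : ℝ) (n : ℕ) (x u : ℝ) :
    ‖FF t n x u‖ = |u| ^ n * Real.exp (-u ^ 4 / 4 - t * u ^ 2 / 2) := by
  unfold FF
  rw [norm_mul, norm_pow, Complex.norm_exp, cphi_re]
  congr 2
  rw [norm_mul]
  simp

lemma abs_pow_le (n : ℕ) (u : ℝ) :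
    |u| ^ n ≤ 1 + 2 ^ n * n.factorial * Real.exp (u ^ 2 / 2) := by
  rcases le_total |u| 1 with h | h
  · have h1 : |u| ^ n ≤ 1 := pow_le_one₀ (abs_nonneg u) h
    have h2 : (0:ℝ) ≤ 2 ^ n * n.factorial * Real.exp (u ^ 2 / 2) := by positivity
    linarith
  · have h1 : |u| ^ n ≤ (u ^ 2) ^ n := by
      apply pow_le_pow_left₀ (abs_nonneg u)
      nlinarith [sq_abs u, abs_nonneg u]
    have h3 : (u ^ 2 / 2) ^ n ≤ n.factorial * Real.exp (u ^ 2 / 2) := by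
      have := Real.pow_div_factorial_le_exp (u ^ 2 / 2) (by positivity) n
      rw [div_le_iff₀ (by positivity)] at this
      linarith [this]
    have h4 : (u ^ 2) ^ n = 2 ^ n * (u ^ 2 / 2) ^ n := by
      rw [← mul_pow]; ring_nf
    have h5 : (0:ℝ) < 2 ^ n := by positivity
    nlinarith [h1, h3, h4]

lemma integrable_bound (t : ℝ) (n : ℕ) :
    Integrable (fun u : ℝ => |u| ^ n * Real.exp (-u ^ 4 / 4 - t * u ^ 2 / 2)) := by
  have hint : Integrable (fun u : ℝ =>
      (Real.exp ((1 - t / 2) ^ 2) * (1 + 2 ^ n * n.factorial)) * Real.exp (-(1/2) * u ^ 2)) :=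
    (integrable_exp_neg_mul_sq (by norm_num)).const_mul _
  refine hint.mono' ?_ ?_
  · exact ((continuous_abs.pow n).mul
      (Real.continuous_exp.comp (by continuity))).aestronglyMeasurable
  · filter_upwards with u
    rw [Real.norm_eq_abs, abs_of_nonneg (by positivity)]
    have hE : Real.exp (-u ^ 4 / 4 - t * u ^ 2 / 2) ≤
        Real.exp ((1 - t / 2) ^ 2) * Real.exp (-u ^ 2) := by
      rw [← Real.exp_add]
      apply Real.exp_le_exp.2
      nlinarith [sq_nonneg (u ^ 2 / 2 - (1 - t / 2))]
    have h1 : |u| ^ n * Real.exp (-u ^ 4 / 4 - t * u ^ 2 / 2) ≤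
        (1 + 2 ^ n * n.factorial * Real.exp (u ^ 2 / 2)) *
          (Real.exp ((1 - t / 2) ^ 2) * Real.exp (-u ^ 2)) :=
      mul_le_mul (abs_pow_le n u) hE (Real.exp_pos _).le (by positivity)
    have e1 : Real.exp (u ^ 2 / 2) * Real.exp (-u ^ 2) = Real.exp (-(1/2) * u ^ 2) := by
      rw [← Real.exp_add]; ring_nf
    have e2 : Real.exp (-u ^ 2) ≤ Real.exp (-(1/2) * u ^ 2) :=
      Real.exp_le_exp.2 (by nlinarith [sq_nonneg u])
    have hA : (0:ℝ) < Real.exp ((1 - t / 2) ^ 2) := Real.exp_pos _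
    have hB : (0:ℝ) ≤ (2:ℝ) ^ n * n.factorial := by positivity
    calc |u| ^ n * Real.exp (-u ^ 4 / 4 - t * u ^ 2 / 2)
        ≤ (1 + 2 ^ n * n.factorial * Real.exp (u ^ 2 / 2)) *
          (Real.exp ((1 - t / 2) ^ 2) * Real.exp (-u ^ 2)) := h1
      _ = Real.exp ((1 - t / 2) ^ 2) * Real.exp (-u ^ 2) +
          Real.exp ((1 - t / 2) ^ 2) * (2 ^ n * n.factorial) *
            (Real.exp (u ^ 2 / 2) * Real.exp (-u ^ 2)) := by ring
      _ ≤ Real.exp ((1 - t / 2) ^ 2) * Real.exp (-(1/2) * u ^ 2) +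
          Real.exp ((1 - t / 2) ^ 2) * (2 ^ n * n.factorial) * Real.exp (-(1/2) * u ^ 2) := by
          rw [e1]
          have := mul_le_mul_of_nonneg_left e2 hA.le
          nlinarith [this]
      _ = (Real.exp ((1 - t / 2) ^ 2) * (1 + 2 ^ n * n.factorial)) *
            Real.exp (-(1/2) * u ^ 2) := by ring

lemma continuous_FF (t : ℝ) (n : ℕ) (x : ℝ) : Continuous (fun u => FF t n x u) := by
  unfold FF cphi
  continuity

lemma integrable_FF (t : ℝ) (n : ℕ) (x : ℝ) : Integrable (fun u => FF t n x u) := by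
  refine (integrable_bound t n).mono' (continuous_FF t n x).aestronglyMeasurable ?_
  filter_upwards with u
  rw [norm_FF]

lemma hasDerivAt_ofReal (u : ℝ) : HasDerivAt (fun v : ℝ => (v : ℂ)) 1 u := by
  simpa using (hasDerivAt_id u).ofReal_comp

/-- derivative in `x` -/
lemma hasDerivAt_FF (t : ℝ) (n : ℕ) (x u : ℝ) :
    HasDerivAt (fun x => FF t n x u) (FF t (n + 1) x u) x := by
  have hx1 := hasDerivAt_ofReal x
  have h1 : HasDerivAt (fun x : ℝ => cphi t x u) (-Complex.I * (u : ℂ)) x := by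
    have h := (hasDerivAt_const x (-(u : ℂ) ^ 4 / 4 - (t : ℂ) * (u : ℂ) ^ 2 / 2)).sub
      (hx1.const_mul (Complex.I * (u : ℂ)))
    exact h.congr_deriv (by ring)
  have h2 := (h1.cexp).const_mul ((-Complex.I * (u : ℂ)) ^ n)
  refine h2.congr_deriv ?_
  unfold FF
  rw [pow_succ]
  ring

/-- derivative in `u` of the pure exponential -/
lemma hasDerivAt_exp_cphi (t x u : ℝ) :
    HasDerivAt (fun u : ℝ => Complex.exp (cphi t x u))
      ((-(u : ℂ) ^ 3 - (t : ℂ) * (u : ℂ) - Complex.I * (x : ℂ)) * Complex.exp (cphi t x u)) u := by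
  have hu4 : HasDerivAt (fun u : ℝ => ((u : ℂ)) ^ 4) (4 * (u : ℂ) ^ 3) u := by
    have := (hasDerivAt_pow 4 u).ofReal_comp
    simpa [Complex.ofReal_pow] using this
  have hu2 : HasDerivAt (fun u : ℝ => ((u : ℂ)) ^ 2) (2 * (u : ℂ)) u := by
    have := (hasDerivAt_pow 2 u).ofReal_comp
    simpa [Complex.ofReal_pow] using this
  have hu1 := hasDerivAt_ofReal u
  have hphi : HasDerivAt (fun u : ℝ => cphi t x u)
      (-(u : ℂ) ^ 3 - (t : ℂ) * (u : ℂ) - Complex.I * (x : ℂ)) u := by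
    have h := ((hu4.neg.div_const 4).sub ((hu2.const_mul (t : ℂ)).div_const 2)).sub
      ((hu1.const_mul Complex.I).mul_const (x : ℂ))
    exact h.congr_deriv (by ring)
  have := hphi.cexp
  convert this using 1
  ring
lemma FF_zero (t x u : ℝ) : FF t 0 x u = Complex.exp (cphi t x u) := by
  simp [FF]

lemma hasDerivAt_intF (t : ℝ) (n : ℕ) (x : ℝ) :
    HasDerivAt (fun x => ∫ u : ℝ, FF t n x u) (∫ u : ℝ, FF t (n + 1) x u) x := by
  have := hasDerivAt_integral_of_dominated_loc_of_deriv_le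
    (F := fun x u => FF t n x u) (F' := fun x u => FF t (n + 1) x u)
    (bound := fun u => |u| ^ (n + 1) * Real.exp (-u ^ 4 / 4 - t * u ^ 2 / 2))
    (x₀ := x) (Metric.ball_mem_nhds x one_pos)
    (Eventually.of_forall fun y => (continuous_FF t n y).aestronglyMeasurable)
    (integrable_FF t n x)
    ((continuous_FF t (n + 1) x).aestronglyMeasurable)
    (Eventually.of_forall fun u => fun y _ => le_of_eq (norm_FF t (n + 1) y u))
    (integrable_bound t (n + 1))
    (Eventually.of_forall fun u => fun y _ => hasDerivAt_FF t n y u)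
  exact this.2

/-- the exponential tends to 0 at ±∞ -/
lemma tendsto_exp_cphi (t x : ℝ) (l : Filter ℝ) (hl : Tendsto (fun u : ℝ => u ^ 2) l atTop) :
    Tendsto (fun u : ℝ => Complex.exp (cphi t x u)) l (nhds 0) := by
  rw [tendsto_zero_iff_norm_tendsto_zero]
  apply squeeze_zero (fun u => norm_nonneg _)
    (g := fun u => Real.exp ((1 - t / 2) ^ 2) * Real.exp (-u ^ 2))
  · intro u
    have h := norm_FF t 0 x u
    rw [FF_zero] at h
    rw [h, pow_zero, one_mul, ← Real.exp_add]
    apply Real.exp_le_exp.2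
    nlinarith [sq_nonneg (u ^ 2 / 2 - (1 - t / 2))]
  · have h1 : Tendsto (fun u : ℝ => Real.exp (-u ^ 2)) l (nhds 0) :=
      Real.tendsto_exp_neg_atTop_nhds_zero.comp hl
    simpa using h1.const_mul (Real.exp ((1 - t / 2) ^ 2))

lemma integrable_gderiv (t x : ℝ) :
    Integrable (fun u : ℝ =>
      (-(u : ℂ) ^ 3 - (t : ℂ) * (u : ℂ) - Complex.I * (x : ℂ)) * Complex.exp (cphi t x u)) := by
  have hint : Integrable (fun u : ℝ =>
      |u| ^ 3 * Real.exp (-u ^ 4 / 4 - t * u ^ 2 / 2)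
      + |t| * (|u| ^ 1 * Real.exp (-u ^ 4 / 4 - t * u ^ 2 / 2))
      + |x| * (|u| ^ 0 * Real.exp (-u ^ 4 / 4 - t * u ^ 2 / 2))) :=
    ((integrable_bound t 3).add ((integrable_bound t 1).const_mul _)).add
      ((integrable_bound t 0).const_mul _)
  refine hint.mono' ?_ ?_
  · apply Continuous.aestronglyMeasurable
    have hc : Continuous (fun u : ℝ => Complex.exp (cphi t x u)) := by
      have := continuous_FF t 0 x
      simpa [funext fun u => FF_zero t x u] using this
    continuity
  · filter_upwards with u
    rw [norm_mul]
    have he : ‖Complex.exp (cphi t x u)‖ = Real.exp (-u ^ 4 / 4 - t * u ^ 2 / 2) := by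
      have h := norm_FF t 0 x u
      rw [FF_zero] at h
      simpa using h
    rw [he]
    have hE : (0:ℝ) ≤ Real.exp (-u ^ 4 / 4 - t * u ^ 2 / 2) := (Real.exp_pos _).le
    have hn : ‖-(u : ℂ) ^ 3 - (t : ℂ) * (u : ℂ) - Complex.I * (x : ℂ)‖
        ≤ |u| ^ 3 + |t| * |u| + |x| := by
      refine le_trans (norm_sub_le _ _) ?_
      gcongr ?_ + ?_
      · refine le_trans (norm_sub_le _ _) ?_
        gcongr ?_ + ?_
        · rw [norm_neg, norm_pow, Complex.norm_real]; simp [Real.norm_eq_abs]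
        · rw [norm_mul, Complex.norm_real, Complex.norm_real]; simp [Real.norm_eq_abs]
      · rw [norm_mul, Complex.norm_I, one_mul, Complex.norm_real]; simp [Real.norm_eq_abs]
    calc ‖-(u : ℂ) ^ 3 - (t : ℂ) * (u : ℂ) - Complex.I * (x : ℂ)‖ *
          Real.exp (-u ^ 4 / 4 - t * u ^ 2 / 2)
        ≤ (|u| ^ 3 + |t| * |u| + |x|) * Real.exp (-u ^ 4 / 4 - t * u ^ 2 / 2) := by gcongr
      _ = _ := by ring

lemma integral_gderiv_zero (t x : ℝ) :
    ∫ u : ℝ, (-(u : ℂ) ^ 3 - (t : ℂ) * (u : ℂ) - Complex.I * (x : ℂ))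
      * Complex.exp (cphi t x u) = 0 := by
  set g : ℝ → ℂ := fun u => Complex.exp (cphi t x u) with hg
  set g' : ℝ → ℂ := fun u =>
    (-(u : ℂ) ^ 3 - (t : ℂ) * (u : ℂ) - Complex.I * (x : ℂ)) * Complex.exp (cphi t x u) with hg'
  have hint := integrable_gderiv t x
  have htop : Tendsto g atTop (nhds 0) :=
    tendsto_exp_cphi t x atTop (tendsto_pow_atTop two_ne_zero)
  have hbot : Tendsto g atBot (nhds 0) := by
    apply tendsto_exp_cphi t x atBot
    have := (tendsto_pow_atTop (two_ne_zero)).comp (tendsto_neg_atBot_atTop : Tendsto (fun u:ℝ => -u) atBot atTop)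
    refine this.congr fun u => by simp [Function.comp]
  have h1 : ∫ u in Set.Ioi (0:ℝ), g' u = 0 - g 0 :=
    integral_Ioi_of_hasDerivAt_of_tendsto' (fun u _ => hasDerivAt_exp_cphi t x u)
      hint.integrableOn htop
  have h2 : ∫ u in Set.Iic (0:ℝ), g' u = g 0 - 0 :=
    integral_Iic_of_hasDerivAt_of_tendsto' (fun u _ => hasDerivAt_exp_cphi t x u)
      hint.integrableOn hbot
  have h3 := intervalIntegral.integral_Iic_add_Ioi (b := (0:ℝ)) hint.integrableOn hint.integrableOn
  rw [← h3, h1, h2]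
  ring

end PearceyAux

open PearceyAux in
/-- `p` is three times continuously differentiable and satisfies
`p''' - t p' - x p = 0`. -/
theorem statement16 (t : ℝ) :
    ContDiff ℝ 3 (pearceyP t) ∧
    ∀ x : ℝ,
      iteratedDeriv 3 (pearceyP t) x - (t : ℂ) * deriv (pearceyP t) x
        - (x : ℂ) * pearceyP t x = 0 := by
  set c : ℂ := ((1 / (2 * Real.pi) : ℝ) : ℂ) with hc
  set q : ℕ → ℝ → ℂ := fun n x => c * ∫ u : ℝ, FF t n x u with hqdef
  have hq : ∀ n x, HasDerivAt (q n) (q (n + 1) x) x :=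
    fun n x => (hasDerivAt_intF t n x).const_mul c
  have hpe : pearceyP t = q 0 := by
    funext x
    simp only [pearceyP, hqdef, FF, cphi, pow_zero, one_mul]
    rfl
  have hderiv : ∀ n, deriv (q n) = q (n + 1) := fun n => funext fun x => (hq n x).deriv
  have hdiff : ∀ n, Differentiable ℝ (q n) := fun n x => (hq n x).differentiableAt
  constructor
  · rw [hpe]
    rw [show (3 : WithTop ℕ∞) = 2 + 1 from rfl]
    refine contDiff_succ_iff_deriv.mpr ⟨hdiff 0, fun h => absurd h (by simp), ?_⟩
    rw [hderiv 0, show (2 : WithTop ℕ∞) = 1 + 1 from rfl]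
    refine contDiff_succ_iff_deriv.mpr ⟨hdiff 1, fun h => absurd h (by simp), ?_⟩
    rw [hderiv 1, show (1 : WithTop ℕ∞) = 0 + 1 from rfl]
    refine contDiff_succ_iff_deriv.mpr ⟨hdiff 2, fun h => absurd h (by simp), ?_⟩
    rw [hderiv 2]
    exact contDiff_zero.mpr (hdiff 3).continuous
  · intro x
    have hit : iteratedDeriv 3 (pearceyP t) = q 3 := by
      rw [hpe, show (3 : ℕ) = 0 + 1 + 1 + 1 from rfl, iteratedDeriv_succ, iteratedDeriv_succ,
        iteratedDeriv_succ, iteratedDeriv_zero, hderiv 0, hderiv 1, hderiv 2]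
    have hd1 : deriv (pearceyP t) = q 1 := by rw [hpe, hderiv 0]
    rw [hit, hd1, hpe]
    have key : ∀ u : ℝ, FF t 3 x u - (t : ℂ) * FF t 1 x u - (x : ℂ) * FF t 0 x u
        = (-Complex.I) * ((-(u : ℂ) ^ 3 - (t : ℂ) * (u : ℂ) - Complex.I * (x : ℂ))
          * Complex.exp (cphi t x u)) := by
      intro u
      have hI : Complex.I ^ 2 = -1 := Complex.I_sq
      simp only [FF]
      linear_combination (-(Complex.I * (u : ℂ) ^ 3 * Complex.exp (cphi t x u)
        + (x : ℂ) * Complex.exp (cphi t x u))) * hI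
    have hint : ∫ u : ℝ, (FF t 3 x u - (t : ℂ) * FF t 1 x u - (x : ℂ) * FF t 0 x u) = 0 := by
      have : (fun u : ℝ => FF t 3 x u - (t : ℂ) * FF t 1 x u - (x : ℂ) * FF t 0 x u)
          = fun u : ℝ => (-Complex.I) * ((-(u : ℂ) ^ 3 - (t : ℂ) * (u : ℂ)
            - Complex.I * (x : ℂ)) * Complex.exp (cphi t x u)) := funext key
      rw [this, integral_const_mul, integral_gderiv_zero, mul_zero]
    have hsplit : ∫ u : ℝ, (FF t 3 x u - (t : ℂ) * FF t 1 x u - (x : ℂ) * FF t 0 x u)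
        = (∫ u : ℝ, FF t 3 x u) - (t : ℂ) * (∫ u : ℝ, FF t 1 x u)
          - (x : ℂ) * (∫ u : ℝ, FF t 0 x u) := by
      have e1 := integral_sub (μ := volume)
        (((integrable_FF t 3 x).sub ((integrable_FF t 1 x).const_mul ((t:ℂ)))))
        ((integrable_FF t 0 x).const_mul ((x:ℂ)))
      have e2 := integral_sub (μ := volume) (integrable_FF t 3 x)
        ((integrable_FF t 1 x).const_mul ((t:ℂ)))
      simp only [Pi.sub_apply] at e1
      rw [e1, e2, integral_const_mul, integral_const_mul]
    have : (∫ u : ℝ, FF t 3 x u) - (t : ℂ) * (∫ u : ℝ, FF t 1 x u)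
        - (x : ℂ) * (∫ u : ℝ, FF t 0 x u) = 0 := by rw [← hsplit, hint]
    simp only [hqdef]
    linear_combination c * this

end
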